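/- Consider the merge sort CHR^rp program with rules: 1 :: ms1 @ arrow(X,A) \ arrow(X,B) ⇔ A < B | arrow(A,B); 2 :: ms2 @ merge(N,A), merge(N,B) ⇔ A < B | merge(2·N+1,A), arrow(A,B); 3 :: ms3 @ number(X) ⇔ merge(0,X), executed under the priority semantics ω_p from an initial goal of n distinct number/1 constraints. Then in every reachable state, for each value V there are at most two stored merge constraints with first argument V, and at most two stored arrow constraints with first argument V. -/

import Mathlib

/-!
Each rule replaces constraints by ones with the same last arguments (`ms2` turns
`merge(N,A), merge(N,B)` into `merge(2N+1,A), arrow(A,B)`), so the multiset of last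
arguments of a reachable store is the input, and stored constraints have pairwise distinct
last arguments. Hence, when `ms1` is not applicable, no value is the first argument of two
`arrow`s, and when `ms2` is not applicable, none is the first argument of two `merge`s.
So the multisets of first arguments of `merge`s and of `arrow`s each stay duplicate free up
to one element occurring twice: `ms2` and `ms3` only add to a duplicate-free multiset, and
`ms1` and `ms2` remove a copy of the repeated element before adding.
-/

namespace MergeSort

/-- The CHR constraints of the merge sort program: `number X`, `merge N A` and
`arrow A B`. -/
inductive MSC : Type
  | number (x : ℤ)
  | merge (n : ℕ) (a : ℤ)
  | arrow (a b : ℤ)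
deriving DecidableEq

/-- Some instance of rule `ms1` (priority 1) is applicable in the store `S`. -/
def ms1App (S : Multiset MSC) : Prop :=
  ∃ X A B : ℤ, A < B ∧ MSC.arrow X A ∈ S ∧ MSC.arrow X B ∈ S

/-- Some instance of rule `ms2` (priority 2) is applicable in the store `S`. -/
def ms2App (S : Multiset MSC) : Prop :=
  ∃ (N : ℕ) (A B : ℤ), A < B ∧ MSC.merge N A ∈ S ∧ MSC.merge N B ∈ S

/-- Transition labels recording which rule fired (for `ms2` also the value `N` of the
matched `merge` constraints). -/
inductive Lab : Type
  | ms1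
  | ms2 (N : ℕ)
  | ms3
deriving DecidableEq

/-- The transitions of the priority semantics ω_p of the merge sort program
`1 :: ms1 @ arrow(X,A) \ arrow(X,B) ⇔ A < B | arrow(A,B)`,
`2 :: ms2 @ merge(N,A), merge(N,B) ⇔ A < B | merge(2·N+1,A), arrow(A,B)`,
`3 :: ms3 @ number(X) ⇔ merge(0,X)`:
among all applicable rule instances, one of highest priority (numerically smallest)
fires, removing the constraints matching removed heads and adding the instantiated
body.  (The guards `A < B` make the matched head constraints distinct; since no rule is
a propagation rule, no propagation history is needed and states are just multisets of
stored constraints.) -/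
inductive Step : Multiset MSC → Lab → Multiset MSC → Prop
  | ms1 (S : Multiset MSC) (X A B : ℤ) :
      A < B → MSC.arrow X A ∈ S → MSC.arrow X B ∈ S →
      Step S Lab.ms1 (MSC.arrow A B ::ₘ S.erase (MSC.arrow X B))
  | ms2 (S : Multiset MSC) (N : ℕ) (A B : ℤ) :
      A < B → MSC.merge N A ∈ S → MSC.merge N B ∈ S →
      ¬ ms1App S →
      Step S (Lab.ms2 N)
        (MSC.merge (2 * N + 1) A ::ₘ MSC.arrow A B ::ₘ
          ((S.erase (MSC.merge N A)).erase (MSC.merge N B)))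
  | ms3 (S : Multiset MSC) (X : ℤ) :
      MSC.number X ∈ S → ¬ ms1App S → ¬ ms2App S →
      Step S Lab.ms3 (MSC.merge 0 X ::ₘ S.erase (MSC.number X))

/-- The initial store: one `number` constraint for each element of `l`. -/
def InitState (l : List ℤ) : Multiset MSC := ↑(l.map MSC.number)

/-- Reachability from the initial store of `l`. -/
def Reach (l : List ℤ) (S : Multiset MSC) : Prop :=
  Relation.ReflTransGen (fun s s' => ∃ lab, Step s lab s') (InitState l) S

/-- `merge` constraints with first argument `N`. -/
def mergeFst (N : ℕ) : MSC → Bool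
  | .merge m _ => m = N
  | _ => false

/-- `arrow` constraints with first argument `V`. -/
def arrowFst (V : ℤ) : MSC → Bool
  | .arrow a _ => a = V
  | _ => false

end MergeSort

namespace Multiset

variable {α β : Type*}

/-- At most one element is repeated, and it occurs at most twice. -/
def NearlyNodup (s : Multiset α) [DecidableEq α] : Prop :=
  ∃ a, (s.erase a).Nodup

variable [DecidableEq α]

theorem Nodup.nearlyNodup_cons {s : Multiset α} (hs : s.Nodup) (a : α) :
    (a ::ₘ s).NearlyNodup :=
  ⟨a, by rwa [erase_cons_head]⟩

theorem NearlyNodup.count_le_two {s : Multiset α} (hs : s.NearlyNodup) (a : α) :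
    s.count a ≤ 2 := by
  obtain ⟨b, hb⟩ := hs
  have hle := nodup_iff_count_le_one.1 hb a
  by_cases hab : a = b
  · subst hab
    rw [count_erase_self] at hle
    omega
  · rw [count_erase_of_ne hab] at hle
    omega

theorem NearlyNodup.nodup_erase {s : Multiset α} (hs : s.NearlyNodup) {a : α}
    (ha : 2 ≤ s.count a) : (s.erase a).Nodup := by
  obtain ⟨b, hb⟩ := hs
  by_cases hab : a = b
  · rwa [hab]
  · have hle := nodup_iff_count_le_one.1 hb a
    rw [count_erase_of_ne hab] at hle
    omega

theorem map_cons_erase {g : α → β} {s : Multiset α} {c : α} (hc : c ∈ s) {d : α}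
    (h : g d = g c) : (d ::ₘ s.erase c).map g = s.map g := by
  conv_rhs => rw [← cons_erase hc]
  rw [map_cons, map_cons, h]

theorem apply_ne_of_nodup_map {g : α → β} {s : Multiset α} (hs : (s.map g).Nodup)
    {c d : α} (hc : c ∈ s) (hd : d ∈ s.erase c) : g c ≠ g d := by
  rw [← cons_erase hc, map_cons, nodup_cons] at hs
  exact fun h => hs.1 (h ▸ mem_map_of_mem g hd)

variable {f : α → Option β}

theorem filterMap_erase_of_none (s : Multiset α) {c : α} (h : f c = none) :
    (s.erase c).filterMap f = s.filterMap f := by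
  by_cases hc : c ∈ s
  · conv_rhs => rw [← cons_erase hc]
    rw [filterMap_cons_none c _ h]
  · rw [erase_of_notMem hc]

variable [DecidableEq β]

theorem filterMap_erase_of_some {s : Multiset α} {c : α} (hc : c ∈ s) {k : β}
    (h : f c = some k) : (s.erase c).filterMap f = (s.filterMap f).erase k := by
  conv_rhs => rw [← cons_erase hc]
  rw [filterMap_cons_some f c _ h, erase_cons_head]

theorem two_le_count_filterMap_iff {s : Multiset α} {k : β} :
    2 ≤ (s.filterMap f).count k ↔
      ∃ c ∈ s, ∃ d ∈ s.erase c, f c = some k ∧ f d = some k := by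
  constructor
  · intro h
    obtain ⟨c, hc, hck⟩ := (mem_filterMap f s).1
      (count_pos.1 (by omega : 0 < (s.filterMap f).count k))
    have hcount : ((s.filterMap f).erase k).count k = (s.filterMap f).count k - 1 :=
      count_erase_self k _
    rw [← filterMap_erase_of_some hc hck] at hcount
    obtain ⟨d, hd, hdk⟩ := (mem_filterMap f _).1
      (count_pos.1 (by omega : 0 < ((s.erase c).filterMap f).count k))
    exact ⟨c, hc, d, hd, hck, hdk⟩
  · rintro ⟨c, hc, d, hd, hck, hdk⟩
    have hpos : 0 < ((s.erase c).filterMap f).count k :=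
      count_pos.2 ((mem_filterMap f _).2 ⟨d, hd, hdk⟩)
    rw [filterMap_erase_of_some hc hck, count_erase_self] at hpos
    omega

end Multiset

namespace MergeSort

namespace MSC

def lastArg : MSC → ℤ
  | number x => x
  | merge _ a => a
  | arrow _ b => b

def mergeFst? : MSC → Option ℕ
  | merge n _ => some n
  | _ => none

def arrowFst? : MSC → Option ℤ
  | arrow a _ => some a
  | _ => none

end MSC

open Multiset

theorem countP_mergeFst (S : Multiset MSC) (N : ℕ) :
    S.countP (fun c => mergeFst N c = true) = (S.filterMap MSC.mergeFst?).count N := by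
  induction S using Multiset.induction_on with
  | empty => simp
  | cons c S ih =>
    rw [countP_cons, ih]
    cases c <;> simp [mergeFst, MSC.mergeFst?, filterMap_cons, count_cons, eq_comm]

theorem countP_arrowFst (S : Multiset MSC) (V : ℤ) :
    S.countP (fun c => arrowFst V c = true) = (S.filterMap MSC.arrowFst?).count V := by
  induction S using Multiset.induction_on with
  | empty => simp
  | cons c S ih =>
    rw [countP_cons, ih]
    cases c <;> simp [arrowFst, MSC.arrowFst?, filterMap_cons, count_cons, eq_comm]

theorem Step.map_lastArg {S S' : Multiset MSC} {lab : Lab} (h : Step S lab S') :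
    S'.map MSC.lastArg = S.map MSC.lastArg := by
  cases h with
  | ms1 X A B _ _ hXB => exact map_cons_erase hXB rfl
  | ms2 N A B hAB hA hB _ =>
    have hB' : MSC.merge N B ∈ S.erase (MSC.merge N A) := by
      rwa [mem_erase_of_ne (by simp [hAB.ne'])]
    rw [map_cons, map_cons_erase (d := MSC.arrow A B) hB' rfl, ← map_cons,
      map_cons_erase (d := MSC.merge (2 * N + 1) A) hA rfl]
  | ms3 X hX _ _ => exact map_cons_erase hX rfl

theorem Reach.map_lastArg {l : List ℤ} {S : Multiset MSC} (h : Reach l S) :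
    S.map MSC.lastArg = l := by
  induction h with
  | refl => simp [InitState, Function.comp_def, MSC.lastArg]
  | tail _ hstep ih => exact hstep.choose_spec.map_lastArg.trans ih

theorem nodup_arrowFst_of_not_ms1App {S : Multiset MSC} (hS : (S.map MSC.lastArg).Nodup)
    (h : ¬ ms1App S) : (S.filterMap MSC.arrowFst?).Nodup := by
  refine nodup_iff_count_le_one.2 fun X => not_lt.1 fun h2 => h ?_
  obtain ⟨_ | _ | ⟨_, A⟩, hc, _ | _ | ⟨_, B⟩, hd, hcX, hdX⟩ :=
    two_le_count_filterMap_iff.1 h2 <;> simp only [MSC.arrowFst?, reduceCtorEq,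
      Option.some.injEq] at hcX hdX
  subst hcX hdX
  have hAB : A ≠ B := apply_ne_of_nodup_map hS hc hd
  rcases hAB.lt_or_gt with hlt | hlt
  · exact ⟨_, A, B, hlt, hc, mem_of_mem_erase hd⟩
  · exact ⟨_, B, A, hlt, mem_of_mem_erase hd, hc⟩

theorem nodup_mergeFst_of_not_ms2App {S : Multiset MSC} (hS : (S.map MSC.lastArg).Nodup)
    (h : ¬ ms2App S) : (S.filterMap MSC.mergeFst?).Nodup := by
  refine nodup_iff_count_le_one.2 fun N => not_lt.1 fun h2 => h ?_
  obtain ⟨_ | ⟨_, A⟩ | _, hc, _ | ⟨_, B⟩ | _, hd, hcN, hdN⟩ :=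
    two_le_count_filterMap_iff.1 h2 <;> simp only [MSC.mergeFst?, reduceCtorEq,
      Option.some.injEq] at hcN hdN
  subst hcN hdN
  have hAB : A ≠ B := apply_ne_of_nodup_map hS hc hd
  rcases hAB.lt_or_gt with hlt | hlt
  · exact ⟨_, A, B, hlt, hc, mem_of_mem_erase hd⟩
  · exact ⟨_, B, A, hlt, mem_of_mem_erase hd, hc⟩

theorem Step.nearlyNodup_mergeFst {S S' : Multiset MSC} {lab : Lab}
    (hlast : (S.map MSC.lastArg).Nodup) (hS : (S.filterMap MSC.mergeFst?).NearlyNodup)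
    (h : Step S lab S') : (S'.filterMap MSC.mergeFst?).NearlyNodup := by
  cases h with
  | ms1 X A B _ _ _ =>
    rwa [filterMap_cons_none _ _ rfl, filterMap_erase_of_none _ rfl]
  | ms2 N A B hAB hA hB _ =>
    have hB' : MSC.merge N B ∈ S.erase (MSC.merge N A) := by
      rwa [mem_erase_of_ne (by simp [hAB.ne'])]
    have hN : 2 ≤ (S.filterMap MSC.mergeFst?).count N :=
      two_le_count_filterMap_iff.2 ⟨_, hA, _, hB', rfl, rfl⟩
    rw [filterMap_cons_some MSC.mergeFst? _ _ rfl, filterMap_cons_none _ _ rfl,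
      filterMap_erase_of_some (f := MSC.mergeFst?) hB' rfl,
      filterMap_erase_of_some (f := MSC.mergeFst?) hA rfl]
    exact ((hS.nodup_erase hN).erase N).nearlyNodup_cons _
  | ms3 X _ _ hno =>
    rw [filterMap_cons_some MSC.mergeFst? _ _ rfl, filterMap_erase_of_none _ rfl]
    exact (nodup_mergeFst_of_not_ms2App hlast hno).nearlyNodup_cons 0

theorem Step.nearlyNodup_arrowFst {S S' : Multiset MSC} {lab : Lab}
    (hlast : (S.map MSC.lastArg).Nodup) (hS : (S.filterMap MSC.arrowFst?).NearlyNodup)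
    (h : Step S lab S') : (S'.filterMap MSC.arrowFst?).NearlyNodup := by
  cases h with
  | ms1 X A B hAB hA hB =>
    have hB' : MSC.arrow X B ∈ S.erase (MSC.arrow X A) := by
      rwa [mem_erase_of_ne (by simp [hAB.ne'])]
    have hX : 2 ≤ (S.filterMap MSC.arrowFst?).count X :=
      two_le_count_filterMap_iff.2 ⟨_, hA, _, hB', rfl, rfl⟩
    rw [filterMap_cons_some MSC.arrowFst? _ _ rfl,
      filterMap_erase_of_some (f := MSC.arrowFst?) hB rfl]
    exact (hS.nodup_erase hX).nearlyNodup_cons A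
  | ms2 N A B _ _ _ hno =>
    rw [filterMap_cons_none _ _ rfl, filterMap_cons_some MSC.arrowFst? _ _ rfl,
      filterMap_erase_of_none _ rfl, filterMap_erase_of_none _ rfl]
    exact (nodup_arrowFst_of_not_ms1App hlast hno).nearlyNodup_cons A
  | ms3 X _ _ _ =>
    rwa [filterMap_cons_none _ _ rfl, filterMap_erase_of_none _ rfl]

theorem Reach.nearlyNodup {l : List ℤ} (hl : l.Nodup) {S : Multiset MSC} (h : Reach l S) :
    (S.filterMap MSC.mergeFst?).NearlyNodup ∧ (S.filterMap MSC.arrowFst?).NearlyNodup := by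
  induction h with
  | refl =>
    exact ⟨⟨0, by simp [InitState, Function.comp_def, MSC.mergeFst?]⟩,
      ⟨0, by simp [InitState, Function.comp_def, MSC.arrowFst?]⟩⟩
  | @tail S₀ _ hreach hstep ih =>
    have hlast : (S₀.map MSC.lastArg).Nodup := by
      rw [Reach.map_lastArg hreach]
      exact coe_nodup.2 hl
    exact ⟨hstep.choose_spec.nearlyNodup_mergeFst hlast ih.1,
      hstep.choose_spec.nearlyNodup_arrowFst hlast ih.2⟩

end MergeSort

open MergeSort in
theorem merge_and_arrow_first_argument_at_most_twice_general
    (l : List ℤ) (hnodup : l.Nodup)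
    (S : Multiset MSC) (hS : Reach l S) :
    (∀ N : ℕ, S.countP (fun c => mergeFst N c = true) ≤ 2) ∧
    (∀ V : ℤ, S.countP (fun c => arrowFst V c = true) ≤ 2) := by
  obtain ⟨hmerge, harrow⟩ := hS.nearlyNodup hnodup
  exact ⟨fun N => countP_mergeFst S N ▸ hmerge.count_le_two N,
    fun V => countP_arrowFst S V ▸ harrow.count_le_two V⟩

open MergeSort in
/-- In the merge sort CHR^rp program executed under ω_p from an initial goal of `n`
distinct `number/1` constraints, in every reachable state there are, for each value
`V`, at most two stored `merge` constraints with first argument `V` and at most two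
stored `arrow` constraints with first argument `V`. -/
theorem merge_and_arrow_first_argument_at_most_twice
    (n : ℕ) (l : List ℤ) (hlen : l.length = n) (hnodup : l.Nodup)
    (S : Multiset MSC) (hS : Reach l S) :
    (∀ N : ℕ, S.countP (fun c => mergeFst N c = true) ≤ 2) ∧
    (∀ V : ℤ, S.countP (fun c => arrowFst V c = true) ≤ 2) :=
  merge_and_arrow_first_argument_at_most_twice_general l hnodup S hS
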